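/- arXiv:2001.09112 — 6 statements merged into one kernel-verified Lean document; each statement's English description precedes it below -/
import Mathlib

section
/- For every integer n ≥ 1, let c_m denote the (finite) number of words of length m in the language P_n = (D_n·{e})*, and let G_n(z) = Σ_{m≥0} c_m z^m ∈ ℚ[[z]] be its generating function. Then G_n(z)·(1 − z·F_n(z)) = 1 in ℚ[[z]], where F_n(z) = Σ_{k≥0} n^k · catalan(k) · z^{2k} is the generating function of D_n. (This is the paper's identity H_{P_n}(q) = 1/(1 − q·H_{D_n}(q)).) -/
/-- The Dyck language over `n` kinds of parentheses. -/
inductive Dyck (n : ℕ) : List (Fin n × Bool) → Prop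
  | nil : Dyck n []
  | append {u v : List (Fin n × Bool)} : Dyck n u → Dyck n v → Dyck n (u ++ v)
  | wrap {w : List (Fin n × Bool)} (i : Fin n) :
      Dyck n w → Dyck n ((i, true) :: (w ++ [(i, false)]))

/-- The language `Dₙ·{e}` over the alphabet `Σₙ ∪ {e}` (the letter `e` is `none`). -/
def DyckE (n : ℕ) : Language (Option (Fin n × Bool)) :=
  {w | ∃ u, Dyck n u ∧ w = u.map some ++ [none]}

/-- The language `Pₙ = (Dₙ·{e})*`. -/
def P (n : ℕ) : Language (Option (Fin n × Bool)) := KStar.kstar (DyckE n)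

/-- The generating function `Gₙ(z) = Σ_m c_m z^m` of `Pₙ`, where `c_m` is the number
of words of length `m` in `Pₙ`. -/
noncomputable def PGF (n : ℕ) : PowerSeries ℚ :=
  PowerSeries.mk fun m => (Nat.card {w : List (Option (Fin n × Bool)) | w ∈ P n ∧ w.length = m} : ℚ)

/-- The generating function `Fₙ(z) = Σ_{k≥0} nᵏ · catalan k · z^{2k}` of the Dyck language. -/
noncomputable def dyckGF (n : ℕ) : PowerSeries ℚ :=
  PowerSeries.mk fun m => if m % 2 = 0 then (n : ℚ) ^ (m / 2) * catalan (m / 2) else 0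

/-!
Every nonempty word of `Pₙ` factors uniquely as `u e v` with `u ∈ Dₙ` and `v ∈ Pₙ`, so the
counting series satisfy `G = 1 + z F G`. Every nonempty word of `Dₙ` factors uniquely as
`aᵢ u bᵢ v` with `u, v ∈ Dₙ`; uniqueness holds because every prefix of a Dyck word has nonnegative
balance, so `u bᵢ` cannot be a prefix of a Dyck word. Hence the number `d_k` of Dyck words of
length `2k` satisfies `d_{k+1} = n Σ_{i+j=k} d_i d_j`, the Catalan recursion scaled by `nᵏ`.
-/

open Finset PowerSeries

def lengthSlice {α : Type*} (L : Set (List α)) (m : ℕ) : Set (List α) :=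
  {w | w ∈ L ∧ w.length = m}

section LengthSlice

variable {α : Type*}

theorem finite_lengthSlice [Finite α] (L : Set (List α)) (m : ℕ) : (lengthSlice L m).Finite :=
  (List.finite_length_eq α m).subset fun _ hw => hw.2

theorem card_lengthSlice_zero {L : Set (List α)} (h : [] ∈ L) :
    Nat.card (lengthSlice L 0) = 1 := by
  have : lengthSlice L 0 = {[]} :=
    Set.ext fun w => ⟨fun hw => List.length_eq_zero_iff.mp hw.2, fun hw => hw ▸ ⟨h, rfl⟩⟩
  rw [this, Nat.card_unique]

theorem card_lengthSlice_eq_zero {L : Set (List α)} {m : ℕ} (h : ∀ w ∈ L, w.length ≠ m) :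
    Nat.card (lengthSlice L m) = 0 := by
  have : lengthSlice L m = ∅ := Set.eq_empty_of_forall_notMem fun w hw => h w hw.1 hw.2
  rw [this, Nat.card_of_isEmpty]

theorem card_lengthSlice_add_of_unique_factorization {ι β γ : Type*} [Fintype ι] [Finite α]
    [Finite β] {A : Set (List α)} {B : Set (List β)} {S : Set (List γ)}
    {f : ι → List α → List β → List γ} {c : ℕ} (hc : 0 < c)
    (hlen : ∀ i u v, (f i u v).length = u.length + v.length + c)
    (hmem : ∀ i, ∀ u ∈ A, ∀ v ∈ B, f i u v ∈ S)
    (hinj : ∀ i i', ∀ u ∈ A, ∀ u' ∈ A, ∀ v v', f i u v = f i' u' v' → i = i' ∧ u = u' ∧ v = v')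
    (hsurj : ∀ w ∈ S, w ≠ [] → ∃ i, ∃ u ∈ A, ∃ v ∈ B, f i u v = w) (m : ℕ) :
    Nat.card (lengthSlice S (m + c)) = Fintype.card ι *
      ∑ p ∈ antidiagonal m, Nat.card (lengthSlice A p.1) * Nat.card (lengthSlice B p.2) := by
  have (k : ℕ) : Finite (lengthSlice A k) := (finite_lengthSlice A k).to_subtype
  have (k : ℕ) : Finite (lengthSlice B k) := (finite_lengthSlice B k).to_subtype
  let Φ : ι × (Σ p : antidiagonal m, lengthSlice A p.1.1 × lengthSlice B p.1.2) →
      lengthSlice S (m + c) := fun ⟨i, p, u, v⟩ =>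
    ⟨f i u v, hmem i u u.2.1 v v.2.1, by
      rw [hlen, u.2.2, v.2.2, mem_antidiagonal.mp p.2]⟩
  have hΦ : Function.Bijective Φ := by
    constructor
    · rintro ⟨i, ⟨p, _⟩, ⟨u, hu, hul⟩, ⟨v, _, hvl⟩⟩ ⟨i', ⟨p', _⟩, ⟨u', hu', hul'⟩, ⟨v', _, hvl'⟩⟩ h
      obtain ⟨rfl, rfl, rfl⟩ := hinj i i' u hu u' hu' v v' (congrArg Subtype.val h)
      obtain rfl : p = p' := Prod.ext (hul.symm.trans hul') (hvl.symm.trans hvl')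
      rfl
    · rintro ⟨w, hw, hwl⟩
      obtain ⟨i, u, hu, v, hv, rfl⟩ := hsurj w hw (List.ne_nil_of_length_pos (by omega))
      refine ⟨⟨i, ⟨(u.length, v.length), mem_antidiagonal.mpr ?_⟩, ⟨u, hu, rfl⟩, ⟨v, hv, rfl⟩⟩, rfl⟩
      rw [hlen] at hwl
      omega
  rw [← Nat.card_congr (Equiv.ofBijective Φ hΦ), Nat.card_prod, Nat.card_eq_fintype_card,
    Nat.card_sigma, ← sum_coe_sort (antidiagonal m)]
  simp only [Nat.card_prod]

theorem List.append_cons_inj_of_forall_append_cons_notMem {A : Set (List α)} {x : α}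
    (hA : ∀ a ∈ A, ∀ t, a ++ x :: t ∉ A) {u u' v v' : List α} (hu : u ∈ A)
    (hu' : u' ∈ A) (h : u ++ x :: v = u' ++ x :: v') : u = u' ∧ v = v' := by
  rcases List.append_eq_append_iff.mp h with ⟨_ | ⟨y, t⟩, rfl, ht⟩ | ⟨_ | ⟨y, t⟩, rfl, ht⟩
  · simpa using ht
  · obtain ⟨rfl, rfl⟩ := List.cons_eq_cons.mp ht
    exact absurd hu' (hA u hu t)
  · simpa using ht.symm
  · obtain ⟨rfl, rfl⟩ := List.cons_eq_cons.mp ht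
    exact absurd hu (hA u' hu' t)

theorem List.map_some_append_none_cons_inj {u u' : List α} {v v' : List (Option α)}
    (h : u.map some ++ none :: v = u'.map some ++ none :: v') : u = u' ∧ v = v' := by
  have hA : ∀ a ∈ Set.range (List.map (some : α → Option α)), ∀ t,
      a ++ none :: t ∉ Set.range (List.map some) := by
    rintro _ ⟨a, rfl⟩ t ⟨b, hb⟩
    simpa using congrArg (none ∈ ·) hb
  obtain ⟨hu, rfl⟩ := List.append_cons_inj_of_forall_append_cons_notMem hA ⟨u, rfl⟩ ⟨u', rfl⟩ h
  exact ⟨List.map_injective_iff.mpr (Option.some_injective α) hu, rfl⟩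

end LengthSlice

theorem Finset.Nat.sum_antidiagonal_two_mul_of_odd {M : Type*} [AddCommMonoid M]
    (f : ℕ × ℕ → M) (hf : ∀ p, Odd p.1 → f p = 0) (k : ℕ) :
    ∑ p ∈ antidiagonal (2 * k), f p = ∑ p ∈ antidiagonal k, f (2 * p.1, 2 * p.2) := by
  set double : ℕ × ℕ → ℕ × ℕ := fun p => (2 * p.1, 2 * p.2)
  have hsub : (antidiagonal k).image double ⊆ antidiagonal (2 * k) := fun p hp => by
    obtain ⟨q, hq, rfl⟩ := mem_image.mp hp
    rw [HasAntidiagonal.mem_antidiagonal] at hq ⊢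
    simp [double, ← hq, mul_add]
  calc ∑ p ∈ antidiagonal (2 * k), f p
      = ∑ p ∈ (antidiagonal k).image double, f p := by
        refine (sum_subset hsub fun p hp hnot => hf _ ?_).symm
        rw [HasAntidiagonal.mem_antidiagonal] at hp
        by_contra hodd
        obtain ⟨i, hi⟩ := Nat.not_odd_iff_even.mp hodd
        exact hnot (mem_image.mpr ⟨(i, p.2 / 2), HasAntidiagonal.mem_antidiagonal.mpr (by omega),
          Prod.ext (by simp [double]; omega) (by simp [double]; omega)⟩)
    _ = ∑ p ∈ antidiagonal k, f (2 * p.1, 2 * p.2) :=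
        sum_image fun p _ q _ h => by simp only [double, Prod.mk.injEq] at h; ext <;> omega

theorem PowerSeries.mul_one_sub_X_mul_eq_one {R : Type*} [CommRing R] {F G : R⟦X⟧}
    (h₀ : constantCoeff G = 1) (hsucc : ∀ m, coeff (m + 1) G = coeff m (F * G)) :
    G * (1 - X * F) = 1 := by
  have hG : G = 1 + X * (F * G) := by
    ext (_ | m)
    · simp [h₀]
    · simp [hsucc, coeff_succ_X_mul]
  linear_combination hG

namespace Dyck

variable {n : ℕ}

def balance (w : List (Fin n × Bool)) : ℤ :=
  (w.map fun x => if x.2 then 1 else -1).sum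

@[simp] theorem balance_nil : balance ([] : List (Fin n × Bool)) = 0 := rfl

@[simp] theorem balance_cons (x : Fin n × Bool) (w : List (Fin n × Bool)) :
    balance (x :: w) = (if x.2 then 1 else -1) + balance w := by
  simp [balance]

@[simp] theorem balance_append (u v : List (Fin n × Bool)) :
    balance (u ++ v) = balance u + balance v := by
  simp [balance]

theorem balance_eq_zero {w : List (Fin n × Bool)} (h : Dyck n w) : balance w = 0 := by
  induction h with
  | nil => rfl
  | append _ _ ihu ihv => simp [ihu, ihv]
  | wrap i _ ih => simp [ih]

theorem balance_nonneg_of_append_eq {w : List (Fin n × Bool)} (h : Dyck n w) :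
    ∀ p s, p ++ s = w → 0 ≤ balance p := by
  induction h with
  | nil =>
    intro p s hps
    simp [(List.append_eq_nil_iff.mp hps).1]
  | @append u v hu _ ihu ihv =>
    intro p s hps
    rcases List.append_eq_append_iff.mp hps with ⟨t, rfl, -⟩ | ⟨t, rfl, ht⟩
    · exact ihu p t rfl
    · simpa [balance_eq_zero hu] using ihv t s ht.symm
  | @wrap w i hw ih =>
    rintro (_ | ⟨x, p⟩) s hps
    · simp
    simp only [List.cons_append, List.cons.injEq] at hps
    obtain ⟨rfl, hps⟩ := hps
    rcases List.append_eq_append_iff.mp hps with ⟨t, rfl, -⟩ | ⟨t, rfl, ht⟩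
    · simpa using (ih p t rfl).trans (by omega)
    · rcases List.append_eq_singleton_iff.mp ht.symm with ⟨rfl, -⟩ | ⟨rfl, -⟩ <;>
        simp [balance_eq_zero hw]

theorem not_append_cons_close {u t : List (Fin n × Bool)} (hu : Dyck n u) (i : Fin n) :
    ¬ Dyck n (u ++ (i, false) :: t) := fun h => by
  simpa [balance_eq_zero hu] using balance_nonneg_of_append_eq h (u ++ [(i, false)]) t (by simp)

theorem exists_eq_cons_append_cons {w : List (Fin n × Bool)} (h : Dyck n w) (hw : w ≠ []) :
    ∃ i, ∃ u, Dyck n u ∧ ∃ v, Dyck n v ∧ (i, true) :: (u ++ (i, false) :: v) = w := by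
  induction h with
  | nil => exact absurd rfl hw
  | @append u v _ hv ihu ihv =>
    rcases eq_or_ne u [] with rfl | hu
    · exact ihv hw
    · obtain ⟨i, u₁, hu₁, v₁, hv₁, rfl⟩ := ihu hu
      exact ⟨i, u₁, hu₁, v₁ ++ v, hv₁.append hv, by simp⟩
  | @wrap u i hu _ => exact ⟨i, u, hu, [], nil, by simp⟩

theorem cons_append_cons_inj {i i' : Fin n} {u u' v v' : List (Fin n × Bool)} (hu : Dyck n u)
    (hu' : Dyck n u')
    (h : (i, true) :: (u ++ (i, false) :: v) = (i', true) :: (u' ++ (i', false) :: v')) :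
    i = i' ∧ u = u' ∧ v = v' := by
  simp only [List.cons.injEq, Prod.mk.injEq, and_true] at h
  obtain ⟨rfl, h⟩ := h
  exact ⟨rfl, List.append_cons_inj_of_forall_append_cons_notMem
    (A := {u | Dyck n u}) (fun _ ha _ => not_append_cons_close ha i) hu hu' h⟩

theorem even_length {w : List (Fin n × Bool)} (h : Dyck n w) : Even w.length := by
  induction h with
  | nil => simp
  | append _ _ ihu ihv => simpa using ihu.add ihv
  | wrap i _ ih => simpa [parity_simps] using ih

end Dyck

section Counting

variable (n : ℕ)

theorem card_lengthSlice_dyck_add_two (m : ℕ) :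
    Nat.card (lengthSlice {w | Dyck n w} (m + 2)) = n * ∑ p ∈ antidiagonal m,
      Nat.card (lengthSlice {w | Dyck n w} p.1) * Nat.card (lengthSlice {w | Dyck n w} p.2) := by
  have := card_lengthSlice_add_of_unique_factorization (A := {w | Dyck n w})
    (B := {w | Dyck n w}) (S := {w | Dyck n w})
    (f := fun (i : Fin n) u v => (i, true) :: (u ++ (i, false) :: v)) two_pos
    (fun _ _ _ => by simp; omega)
    (fun i u hu v hv => show Dyck n _ by simpa using (Dyck.wrap i hu).append hv)
    (fun _ _ _ hu _ hu' _ _ h => Dyck.cons_append_cons_inj hu hu' h)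
    (fun _ hw hne => Dyck.exists_eq_cons_append_cons hw hne) m
  rwa [Fintype.card_fin] at this

theorem card_lengthSlice_dyck_of_odd {m : ℕ} (hm : Odd m) :
    Nat.card (lengthSlice {w | Dyck n w} m) = 0 :=
  card_lengthSlice_eq_zero fun _ hw hl =>
    Nat.not_even_iff_odd.mpr hm (hl ▸ Dyck.even_length hw)

theorem card_lengthSlice_dyck_two_mul (k : ℕ) :
    Nat.card (lengthSlice {w | Dyck n w} (2 * k)) = n ^ k * catalan k := by
  induction k using Nat.strong_induction_on with
  | _ k ih =>
    rcases k with _ | k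
    · simpa using card_lengthSlice_zero (L := {w | Dyck n w}) Dyck.nil
    rw [mul_add_one, card_lengthSlice_dyck_add_two, Finset.Nat.sum_antidiagonal_two_mul_of_odd _
      fun p hp => by rw [card_lengthSlice_dyck_of_odd n hp, zero_mul], catalan_succ', mul_sum,
      mul_sum]
    refine sum_congr rfl fun p hp => ?_
    rw [HasAntidiagonal.mem_antidiagonal] at hp
    rw [ih p.1 (by omega), ih p.2 (by omega), ← hp]
    ring

theorem coeff_dyckGF (m : ℕ) :
    coeff m (dyckGF n) = Nat.card (lengthSlice {w | Dyck n w} m) := by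
  rw [dyckGF, coeff_mk]
  rcases Nat.even_or_odd' m with ⟨k, rfl | rfl⟩
  · rw [if_pos (by omega), Nat.mul_div_cancel_left k two_pos, card_lengthSlice_dyck_two_mul]
    push_cast
    rfl
  · rw [if_neg (by omega), card_lengthSlice_dyck_of_odd n (odd_two_mul_add_one k), Nat.cast_zero]

end Counting

section StarLanguage

variable {n : ℕ}

theorem P_eq_one_add_mul : P n = 1 + DyckE n * P n :=
  (Language.one_add_self_mul_kstar_eq_kstar _).symm

theorem card_lengthSlice_P_add_one (m : ℕ) :
    Nat.card (lengthSlice (P n) (m + 1)) = ∑ p ∈ antidiagonal m,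
      Nat.card (lengthSlice {w | Dyck n w} p.1) * Nat.card (lengthSlice (P n) p.2) := by
  have := card_lengthSlice_add_of_unique_factorization (A := {w | Dyck n w}) (B := P n)
    (S := P n) (f := fun (_ : Unit) u v => u.map some ++ none :: v) one_pos
    (fun _ _ _ => by simp; omega)
    (fun _ u hu v hv => by
      rw [P_eq_one_add_mul]
      exact Or.inr (Language.mem_mul.mpr ⟨_, ⟨u, hu, rfl⟩, v, hv, by simp⟩))
    (fun _ _ _ _ _ _ _ _ h => ⟨rfl, List.map_some_append_none_cons_inj h⟩)
    (fun w hw hne => by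
      rw [P_eq_one_add_mul] at hw
      rcases hw with hw | hw
      · exact absurd hw hne
      obtain ⟨_, ⟨u, hu, rfl⟩, v, hv, rfl⟩ := Language.mem_mul.mp hw
      exact ⟨(), u, hu, v, hv, by simp⟩) m
  rwa [Fintype.card_unit, one_mul] at this

end StarLanguage

theorem stmt_2_general (n : ℕ) :
    (∀ m : ℕ, {w : List (Option (Fin n × Bool)) | w ∈ P n ∧ w.length = m}.Finite) ∧
    PGF n * (1 - PowerSeries.X * dyckGF n) = 1 := by
  refine ⟨finite_lengthSlice (P n), mul_one_sub_X_mul_eq_one ?_ fun m => ?_⟩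
  · rw [← coeff_zero_eq_constantCoeff_apply, PGF, coeff_mk]
    exact_mod_cast card_lengthSlice_zero (Language.nil_mem_kstar (DyckE n))
  · rw [PGF, coeff_mk, coeff_mul]
    simp only [coeff_dyckGF, coeff_mk]
    exact_mod_cast card_lengthSlice_P_add_one m

/-- `Pₙ` has finitely many words of each length, and `Gₙ(z)·(1 − z·Fₙ(z)) = 1`. -/
theorem stmt_2 (n : ℕ) (hn : 1 ≤ n) :
    (∀ m : ℕ, {w : List (Option (Fin n × Bool)) | w ∈ P n ∧ w.length = m}.Finite) ∧
    PGF n * (1 - PowerSeries.X * dyckGF n) = 1 :=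
  stmt_2_general n
end

section
/- Let k be a field, n, m ≥ 1 integers, and φ: Σ_n* → T* a monoid homomorphism, where T = {t_1,…,t_m}. In the free associative algebra F = k⟨X⟩ on the set X of variables {a_i, b_i, a_i^j, b_i^j (1 ≤ i, j ≤ n), x, e, y, t_1, …, t_m}, for every w ∈ P_n and every v ∈ D_n, the element α(w·v)·x·y·e − x·w·y·φ(v)·e lies in the two-sided ideal of F generated by the relations (i)–(iii). -/
/-- The set `X` of variables: `aᵢ`, `bᵢ`, `aᵢʲ`, `bᵢʲ` (`1 ≤ i, j ≤ n`),
`x`, `e`, `y`, and `t₁, …, t_m`. -/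
inductive Var (n m : ℕ) : Type
  | a (i : Fin n)
  | b (i : Fin n)
  | A (i j : Fin n)   -- the variable `aᵢʲ`
  | B (i j : Fin n)   -- the variable `bᵢʲ`
  | x
  | e
  | y
  | t (k : Fin m)

/-- The monomial of `F = k⟨X⟩` corresponding to a word over `X`. -/
noncomputable def mono (K : Type*) [Field K] {n m : ℕ} (w : List (Var n m)) :
    FreeAlgebra K (Var n m) :=
  (w.map (FreeAlgebra.ι K)).prod

/-- Extension of `φ : Σₙ → T*` to a monoid homomorphism `Σₙ* → T*`
(a letter of `Σₙ` is a pair `(i, s)`, with `s = true` for `aᵢ`, `s = false` for `bᵢ`). -/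
def phiWord {n m : ℕ} (φ : Fin n × Bool → List (Fin m)) (v : List (Fin n × Bool)) :
    List (Fin m) :=
  (v.map φ).flatten

/-- The inclusion of `Σₙ ∪ {e}` into `X`. -/
def embGamma {n m : ℕ} : Option (Fin n × Bool) → Var n m
  | none => Var.e
  | some (i, true) => Var.a i
  | some (i, false) => Var.b i

/-- The homomorphism `α : (Σₙ ∪ {e})* → X*` with `α(aᵢ) = aᵢⁱ`, `α(bᵢ) = b₁¹`, `α(e) = b₁¹`
(on the level of letters). -/
def alphaLetter {n m : ℕ} (hn : 0 < n) : Option (Fin n × Bool) → Var n m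
  | none => Var.B ⟨0, hn⟩ ⟨0, hn⟩
  | some (i, true) => Var.A i i
  | some (_, false) => Var.B ⟨0, hn⟩ ⟨0, hn⟩

/-- The set of the relations (i)–(iii). -/
def rels (K : Type*) [Field K] (n m : ℕ) (hn : 0 < n)
    (φ : Fin n × Bool → List (Fin m)) : Set (FreeAlgebra K (Var n m)) :=
  { f | -- (i) aᵢⁱ x − x aᵢⁱ  and  b₁¹ x − x e
        (∃ i : Fin n, f = mono K [Var.A i i, Var.x] - mono K [Var.x, Var.A i i]) ∨
        f = mono K [Var.B ⟨0, hn⟩ ⟨0, hn⟩, Var.x] - mono K [Var.x, Var.e] ∨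
        -- (ii) aᵢʲ a_l − aᵢ a_lʲ, aᵢʲ b_l − aᵢ b_lʲ, bᵢʲ a_l − bᵢ a_lʲ, bᵢʲ b_l − bᵢ b_lʲ,
        --      aᵢʲ e − aᵢ b_j, bᵢʲ e − bᵢ b_j
        (∃ i j l : Fin n, f = mono K [Var.A i j, Var.a l] - mono K [Var.a i, Var.A l j]) ∨
        (∃ i j l : Fin n, f = mono K [Var.A i j, Var.b l] - mono K [Var.a i, Var.B l j]) ∨
        (∃ i j l : Fin n, f = mono K [Var.B i j, Var.a l] - mono K [Var.b i, Var.A l j]) ∨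
        (∃ i j l : Fin n, f = mono K [Var.B i j, Var.b l] - mono K [Var.b i, Var.B l j]) ∨
        (∃ i j : Fin n, f = mono K [Var.A i j, Var.e] - mono K [Var.a i, Var.b j]) ∨
        (∃ i j : Fin n, f = mono K [Var.B i j, Var.e] - mono K [Var.b i, Var.b j]) ∨
        -- (iii) aᵢ y − y φ(aᵢ), bᵢ y − y φ(bᵢ), aᵢʲ y, bᵢʲ y
        (∃ i : Fin n, f = mono K [Var.a i, Var.y]
          - mono K (Var.y :: (φ (i, true)).map Var.t)) ∨
        (∃ i : Fin n, f = mono K [Var.b i, Var.y]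
          - mono K (Var.y :: (φ (i, false)).map Var.t)) ∨
        (∃ i j : Fin n, f = mono K [Var.A i j, Var.y]) ∨
        (∃ i j : Fin n, f = mono K [Var.B i j, Var.y]) }

/-! Modulo the relations, relation (i) moves `x` to the left through `α(w·v)`, turning each
`aᵢⁱ` into itself and each `b₁¹` into `e`. Working from the innermost brackets outwards, the
superscript of each `aᵢⁱ` is then handed to the right by relations (ii) through the already
decoded letters until it reaches the `e` standing for the matching `bᵢ`, which becomes `bᵢ`;
this decodes the word back into `w·v`. Finally relation (iii) moves `y` to the left through
`v`, applying `φ`. -/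

section Monoid

variable {M ι : Type*} [Monoid M]

theorem prod_map_mul_eq_mul_prod_map {p q : ι → M} {z : M} (h : ∀ c, p c * z = z * q c)
    (u : List ι) : (u.map p).prod * z = z * (u.map q).prod := by
  induction u with
  | nil => simp
  | cons c u ih =>
    rw [List.map_cons, List.map_cons, List.prod_cons, List.prod_cons, mul_assoc, ih,
      ← mul_assoc, h, mul_assoc]

theorem mul_prod_map_mul_eq {s t : ι → M} {e b : M} (hswap : ∀ c d, s c * t d = t c * s d)
    (hend : ∀ c, s c * e = t c * b) (c : ι) (p : List ι) :
    s c * (p.map t).prod * e = t c * (p.map t).prod * b := by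
  induction p generalizing c with
  | nil => simpa using hend c
  | cons d p ih =>
    calc s c * (t d :: p.map t).prod * e = t c * (s d * (p.map t).prod * e) := by
          rw [List.prod_cons, ← mul_assoc, hswap, mul_assoc, mul_assoc, mul_assoc]
      _ = t c * (t d :: p.map t).prod * b := by
          rw [ih, List.prod_cons, mul_assoc, mul_assoc, mul_assoc]

end Monoid

section Letters

variable {n m : ℕ}

def superscript (j : Fin n) : Fin n × Bool → Var n m
  | (i, true) => Var.A i j
  | (i, false) => Var.B i j

/-- Relation (i) reads `α(c) x = x β(c)`. -/
def betaLetter : Option (Fin n × Bool) → Var n m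
  | some (i, true) => Var.A i i
  | _ => Var.e

theorem prod_map_phiWord {M : Type*} [Monoid M] (φ : Fin n × Bool → List (Fin m))
    (g : Fin m → M) (v : List (Fin n × Bool)) :
    ((phiWord φ v).map g).prod = (v.map fun c => ((φ c).map g).prod).prod := by
  simp [phiWord, List.map_flatten, List.prod_flatten, List.map_map, Function.comp_def]

variable {M : Type*} [Monoid M] (f : Var n m → M)

theorem prod_map_betaLetter_of_dyck
    (hswap : ∀ j c d, f (superscript j c) * f (embGamma (some d)) =
      f (embGamma (some c)) * f (superscript j d))
    (hend : ∀ j c, f (superscript j c) * f Var.e = f (embGamma (some c)) * f (Var.b j))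
    {v : List (Fin n × Bool)} (hv : Dyck n v) :
    (v.map (f ∘ betaLetter ∘ some)).prod = (v.map (f ∘ embGamma ∘ some)).prod := by
  induction hv with
  | nil => rfl
  | append _ _ ihu ihv => simp only [List.map_append, List.prod_append, ihu, ihv]
  | wrap i _ ih =>
    simpa [ih, mul_assoc, betaLetter, superscript, embGamma] using
      mul_prod_map_mul_eq (s := f ∘ superscript i) (t := f ∘ embGamma ∘ some)
        (hswap i) (hend i) (i, true) _

theorem prod_map_betaLetter_of_mem_P
    (hswap : ∀ j c d, f (superscript j c) * f (embGamma (some d)) =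
      f (embGamma (some c)) * f (superscript j d))
    (hend : ∀ j c, f (superscript j c) * f Var.e = f (embGamma (some c)) * f (Var.b j))
    {w : List (Option (Fin n × Bool))} (hw : w ∈ P n) :
    (w.map (f ∘ betaLetter)).prod = (w.map (f ∘ embGamma)).prod := by
  obtain ⟨L, rfl, hL⟩ := Language.mem_kstar.mp hw
  simp only [List.map_flatten, List.prod_flatten, List.map_map]
  congr 1
  refine List.map_congr_left fun u hu => ?_
  obtain ⟨v, hv, rfl⟩ := hL u hu
  simp [Function.comp_assoc, betaLetter, embGamma, prod_map_betaLetter_of_dyck f hswap hend hv]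

theorem prod_map_alphaLetter_append_xye (hn : 0 < n) (φ : Fin n × Bool → List (Fin m))
    (hx : ∀ c, f (alphaLetter hn c) * f Var.x = f Var.x * f (betaLetter c))
    (hswap : ∀ j c d, f (superscript j c) * f (embGamma (some d)) =
      f (embGamma (some c)) * f (superscript j d))
    (hend : ∀ j c, f (superscript j c) * f Var.e = f (embGamma (some c)) * f (Var.b j))
    (hy : ∀ c, f (embGamma (some c)) * f Var.y = f Var.y * ((φ c).map (f ∘ Var.t)).prod)
    {w : List (Option (Fin n × Bool))} (hw : w ∈ P n)
    {v : List (Fin n × Bool)} (hv : Dyck n v) :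
    (((w ++ v.map some).map (alphaLetter hn) ++ [Var.x, Var.y, Var.e]).map f).prod =
      (([Var.x] ++ w.map embGamma ++ [Var.y] ++ (phiWord φ v).map Var.t ++ [Var.e]).map
        f).prod := by
  have decode : ((w ++ v.map some).map (f ∘ betaLetter)).prod =
      (w.map (f ∘ embGamma)).prod * (v.map (f ∘ embGamma ∘ some)).prod := by
    rw [List.map_append, List.prod_append, prod_map_betaLetter_of_mem_P f hswap hend hw,
      List.map_map]
    exact congrArg _ (prod_map_betaLetter_of_dyck f hswap hend hv)
  calc (((w ++ v.map some).map (alphaLetter hn) ++ [Var.x, Var.y, Var.e]).map f).prod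
      = ((w ++ v.map some).map (f ∘ alphaLetter hn)).prod * f Var.x * (f Var.y * f Var.e) := by
        simp only [List.map_append, List.map_cons, List.map_nil, List.prod_append, List.prod_cons,
          List.prod_nil, List.map_map, Function.comp_assoc, mul_one, mul_assoc]
    _ = f Var.x * ((w ++ v.map some).map (f ∘ betaLetter)).prod * (f Var.y * f Var.e) := by
        rw [prod_map_mul_eq_mul_prod_map (p := f ∘ alphaLetter hn) (q := f ∘ betaLetter) hx]
    _ = f Var.x * (w.map (f ∘ embGamma)).prod *
          ((v.map (f ∘ embGamma ∘ some)).prod * f Var.y) * f Var.e := by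
        rw [decode]; simp only [mul_assoc]
    _ = f Var.x * (w.map (f ∘ embGamma)).prod *
          (f Var.y * ((phiWord φ v).map (f ∘ Var.t)).prod) * f Var.e := by
        rw [prod_map_mul_eq_mul_prod_map (p := f ∘ embGamma ∘ some) hy, prod_map_phiWord]
    _ = (([Var.x] ++ w.map embGamma ++ [Var.y] ++ (phiWord φ v).map Var.t ++ [Var.e]).map
          f).prod := by
        simp [mul_assoc]

end Letters

section Presentation

variable (K : Type*) [Field K] {n m : ℕ} (hn : 0 < n) (φ : Fin n × Bool → List (Fin m))

abbrev Presented : Type _ := (TwoSidedIdeal.span (rels K n m hn φ)).ringCon.Quotient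

def gen (v : Var n m) : Presented K hn φ := (FreeAlgebra.ι K v : FreeAlgebra K (Var n m))

theorem sub_mem_span_rels_iff {p q : FreeAlgebra K (Var n m)} :
    p - q ∈ TwoSidedIdeal.span (rels K n m hn φ) ↔ (p : Presented K hn φ) = q := by
  rw [RingCon.eq, TwoSidedIdeal.rel_iff]

theorem coe_mono (w : List (Var n m)) :
    ((mono K w : FreeAlgebra K (Var n m)) : Presented K hn φ) = (w.map (gen K hn φ)).prod := by
  induction w with
  | nil => simp [mono]
  | cons c w ih => simp_all [mono, gen]

variable {K hn φ}

theorem prod_map_gen_eq_of_mem_rels {p q : List (Var n m)}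
    (h : mono K p - mono K q ∈ rels K n m hn φ) :
    (p.map (gen K hn φ)).prod = (q.map (gen K hn φ)).prod := by
  rw [← coe_mono, ← coe_mono, ← sub_mem_span_rels_iff]
  exact TwoSidedIdeal.subset_span h

theorem gen_alphaLetter_mul_gen_x (c : Option (Fin n × Bool)) :
    gen K hn φ (alphaLetter hn c) * gen K hn φ Var.x =
      gen K hn φ Var.x * gen K hn φ (betaLetter c) := by
  have h : mono K [alphaLetter hn c, Var.x] - mono K [Var.x, betaLetter c] ∈
      rels K n m hn φ := by
    rcases c with _ | ⟨i, _ | _⟩ <;> simp only [rels, alphaLetter, betaLetter] <;> aesop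
  simpa using prod_map_gen_eq_of_mem_rels h

theorem gen_superscript_mul_gen_letter (j : Fin n) (c d : Fin n × Bool) :
    gen K hn φ (superscript j c) * gen K hn φ (embGamma (some d)) =
      gen K hn φ (embGamma (some c)) * gen K hn φ (superscript j d) := by
  have h : mono K [superscript j c, embGamma (some d)] -
      mono K [embGamma (some c), superscript j d] ∈ rels K n m hn φ := by
    rcases c with ⟨i, _ | _⟩ <;> rcases d with ⟨l, _ | _⟩ <;>
      simp only [rels, superscript, embGamma] <;> aesop
  simpa using prod_map_gen_eq_of_mem_rels h

theorem gen_superscript_mul_gen_e (j : Fin n) (c : Fin n × Bool) :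
    gen K hn φ (superscript j c) * gen K hn φ Var.e =
      gen K hn φ (embGamma (some c)) * gen K hn φ (Var.b j) := by
  have h : mono K [superscript j c, Var.e] - mono K [embGamma (some c), Var.b j] ∈
      rels K n m hn φ := by
    rcases c with ⟨i, _ | _⟩ <;> simp only [rels, superscript, embGamma] <;> aesop
  simpa using prod_map_gen_eq_of_mem_rels h

theorem gen_letter_mul_gen_y (c : Fin n × Bool) :
    gen K hn φ (embGamma (some c)) * gen K hn φ Var.y =
      gen K hn φ Var.y * ((φ c).map (gen K hn φ ∘ Var.t)).prod := by
  have h : mono K [embGamma (some c), Var.y] - mono K (Var.y :: (φ c).map Var.t) ∈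
      rels K n m hn φ := by
    rcases c with ⟨i, _ | _⟩ <;> simp only [rels, embGamma] <;> aesop
  simpa using prod_map_gen_eq_of_mem_rels h

end Presentation

theorem stmt_5_general (K : Type*) [Field K] (n m : ℕ) (hn : 1 ≤ n)
    (φ : Fin n × Bool → List (Fin m)) :
    ∀ w : List (Option (Fin n × Bool)), w ∈ P n →
      ∀ v : List (Fin n × Bool), Dyck n v →
        mono K (((w ++ v.map some).map (alphaLetter hn)) ++ [Var.x, Var.y, Var.e])
          - mono K ([Var.x] ++ w.map embGamma ++ [Var.y]
              ++ (phiWord φ v).map Var.t ++ [Var.e])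
          ∈ TwoSidedIdeal.span (rels K n m hn φ) := by
  intro w hw v hv
  rw [sub_mem_span_rels_iff, coe_mono, coe_mono]
  exact prod_map_alphaLetter_append_xye _ hn φ gen_alphaLetter_mul_gen_x
    gen_superscript_mul_gen_letter gen_superscript_mul_gen_e gen_letter_mul_gen_y hw hv

/-- For every `w ∈ Pₙ` and `v ∈ Dₙ`, the element `α(w·v)·x·y·e − x·w·y·φ(v)·e` lies in
the two-sided ideal of `F = k⟨X⟩` generated by the relations (i)–(iii). -/
theorem stmt_5 (K : Type*) [Field K] (n m : ℕ) (hn : 1 ≤ n) (hm : 1 ≤ m)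
    (φ : Fin n × Bool → List (Fin m)) :
    ∀ w : List (Option (Fin n × Bool)), w ∈ P n →
      ∀ v : List (Fin n × Bool), Dyck n v →
        mono K (((w ++ v.map some).map (alphaLetter hn)) ++ [Var.x, Var.y, Var.e])
          - mono K ([Var.x] ++ w.map embGamma ++ [Var.y]
              ++ (phiWord φ v).map Var.t ++ [Var.e])
          ∈ TwoSidedIdeal.span (rels K n m hn φ) :=
  stmt_5_general K n m hn φ
end

section
/- Let k be a field, n, m ≥ 1 integers, and φ: Σ_n* → T* a monoid homomorphism, where T = {t_1,…,t_m}. In the free associative algebra F = k⟨X⟩ on the set X of variables {a_i, b_i, a_i^j, b_i^j (1 ≤ i, j ≤ n), x, e, y, t_1, …, t_m}, for every w ∈ P_n and every v ∈ D_n, the monomial x·w·y·φ(v)·e lies in the two-sided ideal of F generated by the set R consisting of the relations (i)–(iii) together with the monomial x y e. -/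
section Stmt6Aux

variable {K : Type*} [Field K] {n m : ℕ} (hn : 0 < n) (φ : Fin n × Bool → List (Fin m))

/-- The inclusion of `Σₙ` into `X`. -/
def lift {n m : ℕ} (γ : Fin n × Bool) : Var n m := embGamma (some γ)

/-- The superscripted version of a letter of `Σₙ`. -/
def sup {n m : ℕ} (j : Fin n) : Fin n × Bool → Var n m
  | (i, true) => Var.A i j
  | (i, false) => Var.B i j

@[simp] lemma lift_true {n m : ℕ} (i : Fin n) : (lift (i, true) : Var n m) = Var.a i := rfl
@[simp] lemma lift_false {n m : ℕ} (i : Fin n) : (lift (i, false) : Var n m) = Var.b i := rfl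
@[simp] lemma sup_true {n m : ℕ} (j i : Fin n) : (sup j (i, true) : Var n m) = Var.A i j := rfl
@[simp] lemma sup_false {n m : ℕ} (j i : Fin n) : (sup j (i, false) : Var n m) = Var.B i j := rfl

lemma mono_append (u v : List (Var n m)) :
    mono K (u ++ v) = mono K u * mono K v := by
  simp [mono]

/-- The ring congruence generated by the relations. -/
def IC : RingCon (FreeAlgebra K (Var n m)) :=
  (TwoSidedIdeal.span
    (rels K n m hn φ ∪ {mono K [Var.x, Var.y, Var.e]})).ringCon

lemma grel {u v : List (Var n m)}
    (h : mono K u - mono K v ∈ rels K n m hn φ ∪ {mono K [Var.x, Var.y, Var.e]}) :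
    IC hn φ (mono K u) (mono K v) :=
  (TwoSidedIdeal.rel_iff _ _ _).mpr (TwoSidedIdeal.subset_span h)

lemma cword {u v : List (Var n m)} (l r : List (Var n m))
    (h : IC hn φ (mono K u) (mono K v)) {p q : List (Var n m)}
    (hp : p = l ++ u ++ r) (hq : q = l ++ v ++ r) :
    IC hn φ (mono K p) (mono K q) := by
  subst hp hq
  simpa [mono_append, mul_assoc] using
    ((IC hn φ).mul ((IC hn φ).mul ((IC hn φ).refl (mono K l)) h)
      ((IC hn φ).refl (mono K r)))

lemma relAx (i : Fin n) :
    IC hn φ (mono K [Var.A i i, Var.x]) (mono K [Var.x, Var.A i i]) :=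
  grel hn φ (Or.inl (Or.inl ⟨i, rfl⟩))

lemma relBx :
    IC hn φ (mono K [Var.B ⟨0, hn⟩ ⟨0, hn⟩, Var.x]) (mono K [Var.x, Var.e]) :=
  grel hn φ (Or.inl (Or.inr (Or.inl rfl)))

/-- Moving a superscript to the right through one letter. -/
lemma relMove (d d' : Fin n × Bool) (j : Fin n) :
    IC hn φ (mono K [sup j d, lift d']) (mono K [lift d, sup j d']) := by
  obtain ⟨i, s⟩ := d
  obtain ⟨l, s'⟩ := d'
  cases s <;> cases s'
  · exact grel hn φ (Or.inl (Or.inr (Or.inr (Or.inr (Or.inr (Or.inr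
      (Or.inl ⟨i, j, l, rfl⟩)))))))
  · exact grel hn φ (Or.inl (Or.inr (Or.inr (Or.inr (Or.inr
      (Or.inl ⟨i, j, l, rfl⟩))))))
  · exact grel hn φ (Or.inl (Or.inr (Or.inr (Or.inr
      (Or.inl ⟨i, j, l, rfl⟩)))))
  · exact grel hn φ (Or.inl (Or.inr (Or.inr
      (Or.inl ⟨i, j, l, rfl⟩))))

/-- A superscripted letter absorbing `e`. -/
lemma relE (d : Fin n × Bool) (j : Fin n) :
    IC hn φ (mono K [sup j d, Var.e]) (mono K [lift d, Var.b j]) := by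
  obtain ⟨i, s⟩ := d
  cases s
  · exact grel hn φ (Or.inl (Or.inr (Or.inr (Or.inr (Or.inr (Or.inr (Or.inr
      (Or.inr (Or.inl ⟨i, j, rfl⟩)))))))))
  · exact grel hn φ (Or.inl (Or.inr (Or.inr (Or.inr (Or.inr (Or.inr (Or.inr
      (Or.inl ⟨i, j, rfl⟩))))))))

/-- `y` passing a letter of `Σₙ`. -/
lemma relY (d : Fin n × Bool) :
    IC hn φ (mono K [lift d, Var.y]) (mono K (Var.y :: (φ d).map Var.t)) := by
  obtain ⟨i, s⟩ := d
  cases s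
  · exact grel hn φ (Or.inl (Or.inr (Or.inr (Or.inr (Or.inr (Or.inr (Or.inr
      (Or.inr (Or.inr (Or.inr (Or.inl ⟨i, rfl⟩)))))))))))
  · exact grel hn φ (Or.inl (Or.inr (Or.inr (Or.inr (Or.inr (Or.inr (Or.inr
      (Or.inr (Or.inr (Or.inl ⟨i, rfl⟩))))))))))

/-- Transport of a superscript through a whole word up to a final `e`. -/
lemma transp (j : Fin n) (u : List (Fin n × Bool)) (d : Fin n × Bool) :
    IC hn φ (mono K (sup j d :: u.map lift ++ [Var.e]))
      (mono K (lift d :: u.map lift ++ [Var.b j])) := by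
  induction u generalizing d with
  | nil => exact relE hn φ d j
  | cons d' u' ih =>
    have h1 := cword (K := K) hn φ [] (u'.map lift ++ [Var.e]) (relMove hn φ d d' j)
      (p := sup j d :: (d' :: u').map lift ++ [Var.e])
      (q := lift d :: sup j d' :: u'.map lift ++ [Var.e]) (by simp) (by simp)
    have h2 := cword (K := K) hn φ [lift d] [] (ih d')
      (p := lift d :: sup j d' :: u'.map lift ++ [Var.e])
      (q := lift d :: (d' :: u').map lift ++ [Var.b j]) (by simp) (by simp)
    exact h1.trans h2

/-- Pushing `x` to the right through a Dyck word. -/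
lemma gmove {u : List (Fin n × Bool)} (hu : Dyck n u) :
    ∃ g : List (Var n m),
      IC hn φ (mono K (Var.x :: u.map lift)) (mono K (g ++ [Var.x])) := by
  induction hu with
  | nil => exact ⟨[], (IC hn φ).refl _⟩
  | @append u v _ _ ihu ihv =>
    obtain ⟨gu, hgu⟩ := ihu
    obtain ⟨gv, hgv⟩ := ihv
    refine ⟨gu ++ gv, ?_⟩
    have h1 := cword (K := K) hn φ [] (v.map lift) hgu
      (p := Var.x :: (u ++ v).map lift)
      (q := gu ++ Var.x :: v.map lift) (by simp) (by simp)
    have h2 := cword (K := K) hn φ gu [] hgv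
      (p := gu ++ Var.x :: v.map lift)
      (q := (gu ++ gv) ++ [Var.x]) (by simp) (by simp)
    exact h1.trans h2
  | @wrap w i _ ihw =>
    obtain ⟨g, hg⟩ := ihw
    refine ⟨Var.A i i :: g ++ [Var.B ⟨0, hn⟩ ⟨0, hn⟩], ?_⟩
    have h1 := cword (K := K) hn φ [Var.x] [] ((transp hn φ i w (i, true)).symm)
      (p := Var.x :: ((i, true) :: (w ++ [(i, false)])).map lift)
      (q := Var.x :: Var.A i i :: w.map lift ++ [Var.e]) (by simp) (by simp)
    have h2 := cword (K := K) hn φ [] (w.map lift ++ [Var.e]) ((relAx hn φ i).symm)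
      (p := Var.x :: Var.A i i :: w.map lift ++ [Var.e])
      (q := Var.A i i :: Var.x :: w.map lift ++ [Var.e]) (by simp) (by simp)
    have h3 := cword (K := K) hn φ [Var.A i i] [Var.e] hg
      (p := Var.A i i :: Var.x :: w.map lift ++ [Var.e])
      (q := Var.A i i :: g ++ [Var.x, Var.e]) (by simp) (by simp)
    have h4 := cword (K := K) hn φ (Var.A i i :: g) [] ((relBx hn φ).symm)
      (p := Var.A i i :: g ++ [Var.x, Var.e])
      (q := (Var.A i i :: g ++ [Var.B ⟨0, hn⟩ ⟨0, hn⟩]) ++ [Var.x])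
      (by simp) (by simp)
    exact ((h1.trans h2).trans h3).trans h4

/-- Pushing `x` to the right through a word of `Pₙ`. -/
lemma pmove' (L : List (List (Option (Fin n × Bool))))
    (hL : ∀ u ∈ L, u ∈ DyckE n) :
    ∃ g : List (Var n m),
      IC hn φ (mono K (Var.x :: L.flatten.map embGamma)) (mono K (g ++ [Var.x])) := by
  induction L with
  | nil => exact ⟨[], (IC hn φ).refl _⟩
  | cons u L ih =>
    obtain ⟨du, hdu, rfl⟩ := hL u (by simp)
    obtain ⟨g1, hg1⟩ := gmove (K := K) hn φ (m := m) hdu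
    obtain ⟨g2, hg2⟩ := ih (fun u hu => hL u (by simp [hu]))
    refine ⟨g1 ++ Var.B ⟨0, hn⟩ ⟨0, hn⟩ :: g2, ?_⟩
    have hmap : du.map (fun γ => embGamma (some γ)) = du.map (lift (m := m)) := rfl
    have h1 := cword (K := K) hn φ [] (Var.e :: L.flatten.map embGamma) hg1
      (p := Var.x :: ((du.map some ++ [none]) ++ L.flatten).map embGamma)
      (q := g1 ++ Var.x :: Var.e :: L.flatten.map embGamma)
      (by simp [List.map_map, embGamma, hmap]) (by simp)
    have h2 := cword (K := K) hn φ g1 (L.flatten.map embGamma) ((relBx hn φ).symm)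
      (p := g1 ++ Var.x :: Var.e :: L.flatten.map embGamma)
      (q := g1 ++ Var.B ⟨0, hn⟩ ⟨0, hn⟩ :: Var.x :: L.flatten.map embGamma)
      (by simp) (by simp)
    have h3 := cword (K := K) hn φ (g1 ++ [Var.B ⟨0, hn⟩ ⟨0, hn⟩]) [] hg2
      (p := g1 ++ Var.B ⟨0, hn⟩ ⟨0, hn⟩ :: Var.x :: L.flatten.map embGamma)
      (q := (g1 ++ Var.B ⟨0, hn⟩ ⟨0, hn⟩ :: g2) ++ [Var.x])
      (by simp) (by simp)
    exact (h1.trans h2).trans h3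

/-- Pulling the letters of `v` out of `y·φ(v)`. -/
lemma ymove (v : List (Fin n × Bool)) :
    IC hn φ (mono K (Var.y :: (phiWord φ v).map Var.t))
      (mono K (v.map lift ++ [Var.y])) := by
  induction v with
  | nil => exact (IC hn φ).refl _
  | cons γ v' ih =>
    have h1 := cword (K := K) hn φ [] ((phiWord φ v').map Var.t) ((relY hn φ γ).symm)
      (p := Var.y :: (phiWord φ (γ :: v')).map Var.t)
      (q := lift γ :: Var.y :: (phiWord φ v').map Var.t)
      (by simp [phiWord]) (by simp)
    have h2 := cword (K := K) hn φ [lift γ] [] ih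
      (p := lift γ :: Var.y :: (phiWord φ v').map Var.t)
      (q := (γ :: v').map lift ++ [Var.y]) (by simp) (by simp)
    exact h1.trans h2

end Stmt6Aux

/-- For every `w ∈ Pₙ` and `v ∈ Dₙ`, the monomial `x·w·y·φ(v)·e` lies in the
two-sided ideal of `F = k⟨X⟩` generated by the relations (i)–(iii) together with
the monomial `x y e` (relation (iv)). -/
theorem stmt_6 (K : Type*) [Field K] (n m : ℕ) (hn : 1 ≤ n) (hm : 1 ≤ m)
    (φ : Fin n × Bool → List (Fin m)) :
    ∀ w : List (Option (Fin n × Bool)), w ∈ P n →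
      ∀ v : List (Fin n × Bool), Dyck n v →
        mono K ([Var.x] ++ w.map embGamma ++ [Var.y]
            ++ (phiWord φ v).map Var.t ++ [Var.e])
          ∈ TwoSidedIdeal.span
              (rels K n m hn φ ∪ {mono K [Var.x, Var.y, Var.e]}) := by
  intro w hw v hv
  obtain ⟨L, rfl, hL⟩ := Language.mem_kstar.mp hw
  rw [TwoSidedIdeal.mem_iff]
  obtain ⟨g1, h1⟩ := pmove' (K := K) hn φ L hL
  obtain ⟨g2, h2⟩ := gmove (K := K) hn φ (m := m) hv
  have s1 := cword (K := K) hn φ (Var.x :: L.flatten.map embGamma) [Var.e] (ymove (K := K) hn φ v)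
    (p := [Var.x] ++ L.flatten.map embGamma ++ [Var.y]
      ++ (phiWord φ v).map Var.t ++ [Var.e])
    (q := Var.x :: L.flatten.map embGamma ++ v.map lift ++ [Var.y, Var.e])
    (by simp) (by simp)
  have s2 := cword (K := K) hn φ [] (v.map lift ++ [Var.y, Var.e]) h1
    (p := Var.x :: L.flatten.map embGamma ++ v.map lift ++ [Var.y, Var.e])
    (q := g1 ++ Var.x :: v.map lift ++ [Var.y, Var.e]) (by simp) (by simp)
  have s3 := cword (K := K) hn φ g1 [Var.y, Var.e] h2
    (p := g1 ++ Var.x :: v.map lift ++ [Var.y, Var.e])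
    (q := (g1 ++ g2) ++ [Var.x, Var.y, Var.e]) (by simp) (by simp)
  have s4 : IC hn φ (mono K ((g1 ++ g2) ++ [Var.x, Var.y, Var.e])) 0 := by
    have hxye : IC hn φ (mono K [Var.x, Var.y, Var.e]) 0 :=
      (TwoSidedIdeal.mem_iff _ _).mp (TwoSidedIdeal.subset_span (Or.inr rfl))
    simpa [mono_append, mul_assoc] using
      ((IC hn φ).mul ((IC hn φ).refl (mono K (g1 ++ g2))) hxye)
  exact ((s1.trans s2).trans s3).trans s4
end

section
/- For every integer n ≥ 1, the power series F_n(z) = Σ_{k≥0} n^k · catalan(k) · z^{2k} ∈ ℚ[[z]] is not a rational function: there do not exist polynomials p, q ∈ ℚ[z] with q ≠ 0 such that q·F_n = p holds in ℚ[[z]]. (Equivalently, the generating function of the Dyck language D_n, i.e. the series expansion of (1−√(1−4nz²))/(2nz²), is non-rational.) -/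
/- Infinite descent: `s ∣ r²` forces `s ∣ r` and then `s ∣ q`, and dividing out gives a solution
with a strictly smaller `q`. -/
theorem Squarefree.isUnit_of_mul_sq_eq_sq {R : Type*} [CommMonoidWithZero R] [IsCancelMulZero R]
    [Nontrivial R] [DecompositionMonoid R] [WfDvdMonoid R] {s : R} (hs : Squarefree s)
    {q r : R} (hq : q ≠ 0) (h : s * q ^ 2 = r ^ 2) : IsUnit s := by
  by_contra hs_unit
  induction q using (wellFounded_dvdNotUnit (α := R)).induction generalizing r with
  | _ q ih =>
  obtain ⟨t, rfl⟩ := hs.isRadical 2 r ⟨q ^ 2, h.symm⟩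
  have hq_sq : q ^ 2 = s * t ^ 2 :=
    mul_left_cancel₀ hs.ne_zero (by rw [h, mul_pow, sq s, mul_assoc])
  obtain ⟨u, rfl⟩ := hs.isRadical 2 q ⟨t ^ 2, hq_sq⟩
  have hu : u ≠ 0 := right_ne_zero_of_mul hq
  refine ih u ⟨hu, s, hs_unit, mul_comm _ _⟩ hu (r := t) (mul_left_cancel₀ hs.ne_zero ?_)
  rw [← hq_sq, mul_pow, sq s, mul_assoc]

namespace Polynomial

theorem separable_one_sub_C_mul_X_sq {K : Type*} [Field K] [NeZero (2 : K)] (c : K) :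
    (1 - C c * X ^ 2).Separable := by
  refine ⟨1, C (-2⁻¹ : K) * X, ?_⟩
  have hC : C (-2⁻¹ : K) * C (c * 2) = -C c := by
    rw [← C_mul, ← C_neg]
    field_simp
  simp only [derivative_sub, derivative_one, derivative_C_mul_X_pow, Nat.cast_ofNat]
  linear_combination (-X ^ 2) * hC

end Polynomial

theorem mul_sq_eq_sq_of_map_mul_eq {S R : Type*} [CommRing S] [CommRing R] {f : S →+* R}
    (hf : Function.Injective f) {a p q : S} {F : R} (hF : F ^ 2 * f a + 1 = F)
    (h : f q * F = f p) : (1 - 4 * a) * q ^ 2 = (2 * a * p - q) ^ 2 := by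
  apply hf
  simp only [map_mul, map_sub, map_one, map_ofNat, map_pow]
  linear_combination (-4 * f a * f q ^ 2) * hF + 4 * f a * (f a * (f p + f q * F) - f q) * h

open PowerSeries in
theorem dyckGF_eq_expand_rescale_catalanSeries (n : ℕ) :
    dyckGF n = expand 2 two_ne_zero (rescale (n : ℚ) (map (Nat.castRingHom ℚ) catalanSeries)) := by
  ext m
  simp [dyckGF, coeff_expand, coeff_rescale, Nat.dvd_iff_mod_eq_zero]

open PowerSeries in
theorem dyckGF_sq_mul_add_one (n : ℕ) :
    dyckGF n ^ 2 * (C (n : ℚ) * X ^ 2) + 1 = dyckGF n := by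
  have := congrArg (fun f => expand 2 two_ne_zero (rescale (n : ℚ) (map (Nat.castRingHom ℚ) f)))
    catalanSeries_sq_mul_X_add_one
  simpa [← dyckGF_eq_expand_rescale_catalanSeries, mul_comm] using this

open Polynomial in
/-- The power series `Fₙ` is not a rational function: there are no polynomials
`p, q ∈ ℚ[z]` with `q ≠ 0` and `q·Fₙ = p` in `ℚ[[z]]`. -/
theorem stmt_7 (n : ℕ) (hn : 1 ≤ n) :
    ¬ ∃ (p q : Polynomial ℚ), q ≠ 0 ∧
      (q : PowerSeries ℚ) * dyckGF n = (p : PowerSeries ℚ) := by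
  rintro ⟨p, q, hq, h⟩
  have hF : dyckGF n ^ 2 * coeToPowerSeries.ringHom (C (n : ℚ) * X ^ 2) + 1 = dyckGF n := by
    rw [coeToPowerSeries.ringHom_apply, coe_mul, coe_C, coe_pow, coe_X]
    exact dyckGF_sq_mul_add_one n
  have hsq : (1 - C (4 * n : ℚ) * X ^ 2) * q ^ 2 = (2 * (C (n : ℚ) * X ^ 2) * p - q) ^ 2 := by
    rw [map_mul, map_ofNat, mul_assoc]
    exact mul_sq_eq_sq_of_map_mul_eq (coe_injective ℚ) hF h
  have hs_unit := (separable_one_sub_C_mul_X_sq _).squarefree.isUnit_of_mul_sq_eq_sq hq hsq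
  have hs_deg : (1 - C (4 * n : ℚ) * X ^ 2).natDegree = 2 := by
    compute_degree!
    positivity
  rw [natDegree_eq_zero_of_isUnit hs_unit] at hs_deg
  exact absurd hs_deg two_ne_zero.symm
end

section
/- For every integer n ≥ 1, let F_n(z) = Σ_{k≥0} n^k · catalan(k) · z^{2k} ∈ ℚ[[z]], let S_n(z) = 1 − 2n·z²·F_n(z) (the power series expansion of √(1−4nz²)), and let E_n(z) = 1 − (2n²+4n+3)z + (4n³+4n²+3n+1/2)z² + z³ + (1/2)z²·S_n(z) ∈ ℚ[[z]]. Then E_n has constant term 1 (so it is invertible in ℚ[[z]]), and its inverse H = E_n^{−1} is not a rational function: there do not exist polynomials p, q ∈ ℚ[z] with q ≠ 0 such that q·H = p in ℚ[[z]]. (H is the Hilbert series of the finitely presented graded algebra A of Example 1, constructed from L = D_n, and the statement is the paper's claim that this Hilbert series is a non-rational algebraic function.) -/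
/-- `Sₙ(z) = 1 − 2n·z²·Fₙ(z)`, the power series expansion of `√(1 − 4nz²)`. -/
noncomputable def sqrtSeries (n : ℕ) : PowerSeries ℚ :=
  1 - 2 * (n : PowerSeries ℚ) * PowerSeries.X ^ 2 * dyckGF n

/-- `Eₙ(z) = 1 − (2n²+4n+3)z + (4n³+4n²+3n+1/2)z² + z³ + (1/2)z²·Sₙ(z)`,
the inverse of the Hilbert series of the algebra of Example 1. -/
noncomputable def E (n : ℕ) : PowerSeries ℚ :=
  1 - PowerSeries.C (R := ℚ) (2 * (n : ℚ) ^ 2 + 4 * n + 3) * PowerSeries.X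
    + PowerSeries.C (R := ℚ) (4 * (n : ℚ) ^ 3 + 4 * n ^ 2 + 3 * n + 1 / 2) * PowerSeries.X ^ 2
    + PowerSeries.X ^ 3
    + PowerSeries.C (R := ℚ) (1 / 2) * PowerSeries.X ^ 2 * sqrtSeries n

/-
`Fₙ(z)` is the Catalan series evaluated at `n z²`, so `Fₙ = 1 + n z² Fₙ²` and `Sₙ² = 1 − 4nz²`.
Write `Eₙ = a + z² Sₙ / 2` with `a ∈ ℚ[z]`. If `q Eₙ⁻¹ = p` then `q = p Eₙ`, so
`c Sₙ = b` with the polynomials `c = p z² / 2` and `b = q − p a`; squaring gives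
`b² = (1 − 4nz²) c²` in `ℚ[z]`. Over `ℝ`, `1 − 4nz²` has the simple root `1 / √(4n)`, whereas
both `b²` and `c²` vanish to even order there, so `c = 0`, hence `p = 0` and `q = 0`.
-/

open scoped Polynomial PowerSeries

namespace Polynomial

variable {R : Type*} [CommRing R] [IsDomain R]

theorem eq_zero_of_sq_eq_mul_sq {r b c : R[X]} {a : R} (hr : r.rootMultiplicity a = 1)
    (h : b ^ 2 = r * c ^ 2) : c = 0 := by
  by_contra hc
  have hr0 : r ≠ 0 := by rintro rfl; simp at hr
  have hrc : r * c ^ 2 ≠ 0 := mul_ne_zero hr0 (pow_ne_zero 2 hc)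
  have hb : b ^ 2 ≠ 0 := h ▸ hrc
  have hmult := congrArg (rootMultiplicity a) h
  rw [sq, rootMultiplicity_mul (sq b ▸ hb), rootMultiplicity_mul hrc, hr, sq,
    rootMultiplicity_mul (sq c ▸ pow_ne_zero 2 hc)] at hmult
  omega

theorem rootMultiplicity_one_sub_C_mul_X_sq {K : Type*} [Field K] [NeZero (2 : K)] {u α : K}
    (h : u * α ^ 2 = 1) : (1 - C u * X ^ 2).rootMultiplicity α = 1 := by
  have hne : (1 - C u * X ^ 2 : K[X]) ≠ 0 := fun h0 => by
    simpa using congrArg (eval 0) h0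
  have hroot : (1 - C u * X ^ 2).IsRoot α := by simp [h]
  have hderiv : ¬ (derivative (1 - C u * X ^ 2)).IsRoot α := by
    have hu : u ≠ 0 := left_ne_zero_of_mul_eq_one h
    have hα : α ≠ 0 := pow_ne_zero_iff two_ne_zero |>.mp (right_ne_zero_of_mul_eq_one h)
    simp [hu, hα, one_add_one_eq_two, two_ne_zero]
  have hpos := (rootMultiplicity_pos hne).mpr hroot
  have hle : ¬ 1 < (1 - C u * X ^ 2).rootMultiplicity α :=
    fun h1 => hderiv ((one_lt_rootMultiplicity_iff_isRoot hne).mp h1).2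
  omega

end Polynomial

namespace PowerSeries

theorem dyckGF_eq_expand_rescale (n : ℕ) :
    dyckGF n = expand 2 two_ne_zero (rescale (n : ℚ) (map (Nat.castRingHom ℚ) catalanSeries)) := by
  ext m
  simp [dyckGF, coeff_expand, Nat.dvd_iff_mod_eq_zero]

theorem dyckGF_eq_one_add (n : ℕ) : dyckGF n = 1 + (n : ℚ⟦X⟧) * X ^ 2 * dyckGF n ^ 2 := by
  have h := congrArg (fun f => expand 2 two_ne_zero (rescale (n : ℚ) (map (Nat.castRingHom ℚ) f)))
    catalanSeries_sq_mul_X_add_one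
  simp only [map_add, map_mul, map_pow, map_one, map_X, rescale_X, expand_X, expand_C,
    ← dyckGF_eq_expand_rescale] at h
  rw [map_natCast] at h
  linear_combination -h

theorem sqrtSeries_sq (n : ℕ) : sqrtSeries n ^ 2 = 1 - 4 * (n : ℚ⟦X⟧) * X ^ 2 := by
  rw [sqrtSeries]
  linear_combination -4 * (n : ℚ⟦X⟧) * X ^ 2 * dyckGF_eq_one_add n

end PowerSeries

theorem eq_zero_of_coe_mul_sqrtSeries_eq_coe {n : ℕ} (hn : n ≠ 0) {b c : ℚ[X]}
    (h : (c : ℚ⟦X⟧) * sqrtSeries n = b) : c = 0 := by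
  have hsq : b ^ 2 = (1 - Polynomial.C (4 * n : ℚ) * Polynomial.X ^ 2) * c ^ 2 := by
    apply Polynomial.coe_inj.mp
    simp only [Polynomial.coe_pow, Polynomial.coe_mul, Polynomial.coe_sub, Polynomial.coe_one,
      Polynomial.coe_C, Polynomial.coe_X, ← h]
    simp only [map_mul, map_natCast, map_ofNat]
    linear_combination (c : ℚ⟦X⟧) ^ 2 * PowerSeries.sqrtSeries_sq n
  have hα : (4 * n : ℝ) * (√(4 * n))⁻¹ ^ 2 = 1 := by
    have : (0 : ℝ) < 4 * n := by positivity
    rw [inv_pow, Real.sq_sqrt this.le, mul_inv_cancel₀ this.ne']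
  have hsqℝ := congrArg (Polynomial.map (algebraMap ℚ ℝ)) hsq
  simp only [Polynomial.map_pow, Polynomial.map_mul, Polynomial.map_sub, Polynomial.map_one,
    Polynomial.map_C, Polynomial.map_X] at hsqℝ
  have := Polynomial.eq_zero_of_sq_eq_mul_sq
    (Polynomial.rootMultiplicity_one_sub_C_mul_X_sq (by simpa using hα)) hsqℝ
  exact (Polynomial.map_eq_zero_iff (algebraMap ℚ ℝ).injective).mp this

theorem constantCoeff_E (n : ℕ) : PowerSeries.constantCoeff (E n) = 1 := by
  simp [E, sqrtSeries]

theorem exists_E_eq_coe_add (n : ℕ) :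
    ∃ a : ℚ[X], E n = (a : ℚ⟦X⟧) + PowerSeries.C (1 / 2 : ℚ) * PowerSeries.X ^ 2 * sqrtSeries n :=
  ⟨1 - Polynomial.C (2 * (n : ℚ) ^ 2 + 4 * n + 3) * Polynomial.X
    + Polynomial.C (4 * (n : ℚ) ^ 3 + 4 * n ^ 2 + 3 * n + 1 / 2) * Polynomial.X ^ 2
    + Polynomial.X ^ 3, by
    simp only [E, Polynomial.coe_add, Polynomial.coe_sub, Polynomial.coe_mul, Polynomial.coe_pow,
      Polynomial.coe_one, Polynomial.coe_C, Polynomial.coe_X]⟩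

/-- `Eₙ` has constant term `1` (hence is invertible in `ℚ[[z]]`), and its inverse
`H = Eₙ⁻¹` — the Hilbert series of the algebra of Example 1 — is not a rational
function. -/
theorem stmt_8 (n : ℕ) (hn : 1 ≤ n) :
    PowerSeries.constantCoeff (R := ℚ) (E n) = 1 ∧
    ¬ ∃ (p q : Polynomial ℚ), q ≠ 0 ∧
      (q : PowerSeries ℚ) * (E n)⁻¹ = (p : PowerSeries ℚ) := by
  refine ⟨constantCoeff_E n, ?_⟩
  rintro ⟨p, q, hq, hpq⟩
  have hqpE : (q : ℚ⟦X⟧) = p * E n :=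
    ((PowerSeries.eq_mul_inv_iff_mul_eq (by simp [constantCoeff_E n])).mp hpq.symm).symm
  obtain ⟨a, ha⟩ := exists_E_eq_coe_add n
  have hS : ((Polynomial.C (1 / 2 : ℚ) * p * Polynomial.X ^ 2 : ℚ[X]) : ℚ⟦X⟧) * sqrtSeries n
      = (q - p * a : ℚ[X]) := by
    push_cast
    linear_combination -hqpE - (p : ℚ⟦X⟧) * ha
  have hp : p = 0 := by
    simpa using eq_zero_of_coe_mul_sqrtSeries_eq_coe (by omega) hS
  exact hq (Polynomial.coe_inj.mp (by simp [hqpE, hp]))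
end

section
/- Let φ: Σ_2* → {A, B}* be the monoid homomorphism determined by φ(a_1) = A, φ(b_1) = B, φ(a_2) = B, φ(b_2) = A. Then the image φ(D_2) of the Dyck language D_2 is exactly the language of all words over the two-letter alphabet {A, B} containing the same number of occurrences of A and of B: for every w ∈ {A,B}*, w ∈ φ(D_2) if and only if the number of A's in w equals the number of B's in w. -/
/-- The letterwise description of `φ : Σ₂* → {A, B}*` (with `A = true`, `B = false`):
`φ(a₁) = A`, `φ(b₁) = B`, `φ(a₂) = B`, `φ(b₂) = A`. -/
def phiLetter : Fin 2 × Bool → List Bool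
  | (⟨0, _⟩, true) => [true]    -- a₁ ↦ A
  | (⟨0, _⟩, false) => [false]  -- b₁ ↦ B
  | (⟨1, _⟩, true) => [false]   -- a₂ ↦ B
  | (⟨1, _⟩, false) => [true]   -- b₂ ↦ A

/-- The extension of `φ` to a monoid homomorphism `Σ₂* → {A, B}*`. -/
def phi (u : List (Fin 2 × Bool)) : List Bool := (u.map phiLetter).flatten

/-!
A Dyck word maps to a balanced word because `φ(aᵢ)` and `φ(bᵢ)` are always complementary
letters. Conversely, a nonempty balanced word `w` contains both letters, hence a factor `c c̄`;
deleting it leaves a shorter balanced word `φ(u')` with `u' ∈ D₂`, and inserting the matched pair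
`aᵢ bᵢ` with `φ(aᵢ) = c` at the corresponding place of `u'` gives a Dyck word mapping to `w`.
-/

theorem Dyck.insert {n : ℕ} {x y v : List (Fin n × Bool)} (hxy : Dyck n (x ++ y))
    (hv : Dyck n v) : Dyck n (x ++ v ++ y) := by
  generalize hu : x ++ y = u at hxy
  induction hxy generalizing x y with
  | nil =>
    obtain ⟨rfl, rfl⟩ := List.append_eq_nil_iff.mp hu
    simpa using hv
  | append h₁ h₂ ih₁ ih₂ =>
    rcases List.append_eq_append_iff.mp hu with ⟨m, rfl, rfl⟩ | ⟨m, rfl, rfl⟩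
    · simpa using (ih₁ rfl).append h₂
    · simpa using h₁.append (ih₂ rfl)
  | @wrap w i hw ih =>
    rcases x with _ | ⟨p, x⟩
    · simpa [← hu] using hv.append (.wrap i hw)
    simp only [List.cons_append, List.cons.injEq] at hu
    obtain ⟨rfl, hu⟩ := hu
    rcases y.eq_nil_or_concat' with rfl | ⟨y, q, rfl⟩
    · simp only [List.append_nil] at hu ⊢
      simpa [hu] using (Dyck.wrap i hw).append hv
    · rw [← List.append_assoc] at hu
      obtain ⟨rfl, ⟨⟩⟩ := List.append_inj' hu rfl
      simpa using Dyck.wrap i (ih rfl)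

theorem List.exists_eq_append_cons_cons_ne {α : Type*} {l : List α} {a b : α} (ha : a ∈ l)
    (hb : b ∈ l) (hab : a ≠ b) : ∃ l₁ c d l₂, c ≠ d ∧ l = l₁ ++ c :: d :: l₂ := by
  by_contra! h
  have hchain : l.IsChain (· = ·) := isChain_iff_forall_rel_of_append_cons_cons.mpr
    fun c d l₁ l₂ hl => by_contra fun hcd => h l₁ c d l₂ hcd hl
  exact hab (isChain_iff_pairwise.mp hchain |>.forall ha hb hab)

theorem List.mem_of_count_true_eq_count_false {w : List Bool} (hw : w.count true = w.count false)
    (hne : w ≠ []) (c : Bool) : c ∈ w := by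
  have := count_true_add_count_false w
  have := length_pos_iff.mpr hne
  cases c <;> exact count_pos_iff.mp (by omega)

def phiBit (p : Fin 2 × Bool) : Bool := xor p.2 (decide (p.1 = 1))

theorem phiBit_false (i : Fin 2) : phiBit (i, false) = !phiBit (i, true) := by
  simp [phiBit]

theorem phi_eq_map (u : List (Fin 2 × Bool)) : phi u = u.map phiBit := by
  have hletter (p : Fin 2 × Bool) : phiLetter p = [phiBit p] := by
    obtain ⟨i, b⟩ := p
    fin_cases i <;> cases b <;> rfl
  rw [phi, ← List.flatMap_def, List.map_eq_flatMap, funext hletter]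

theorem count_phi_eq_of_dyck {u : List (Fin 2 × Bool)} (hu : Dyck 2 u) :
    (phi u).count true = (phi u).count false := by
  rw [phi_eq_map]
  induction hu with
  | nil => rfl
  | append _ _ ih₁ ih₂ => simp only [List.map_append, List.count_append, ih₁, ih₂]
  | wrap i _ ih =>
    simp only [List.map_cons, List.map_append, List.count_cons, List.count_append,
      phiBit_false, ih]
    cases phiBit (i, true) <;> simp

theorem exists_dyck_phi_eq_pair (c : Bool) : ∃ u, Dyck 2 u ∧ phi u = [c, !c] := by
  refine ⟨[(if c then 0 else 1, true), (if c then 0 else 1, false)], ?_, by cases c <;> rfl⟩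
  simpa using Dyck.wrap (if c then 0 else 1) Dyck.nil

theorem exists_dyck_phi_eq_of_count_eq (w : List Bool) (hw : w.count true = w.count false) :
    ∃ u, Dyck 2 u ∧ phi u = w := by
  by_cases hnil : w = []
  · exact ⟨[], .nil, hnil ▸ rfl⟩
  obtain ⟨x, c, d, y, hcd, rfl⟩ := List.exists_eq_append_cons_cons_ne
    (List.mem_of_count_true_eq_count_false hw hnil true) (List.mem_of_count_true_eq_count_false hw hnil false) (by simp)
  obtain rfl := Bool.eq_not_of_ne hcd.symm
  have hxy : (x ++ y).count true = (x ++ y).count false := by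
    simp only [List.count_append, List.count_cons] at hw ⊢
    cases c <;> grind
  obtain ⟨u, hu, hphi⟩ := exists_dyck_phi_eq_of_count_eq (x ++ y) hxy
  rw [phi_eq_map, List.map_eq_append_iff] at hphi
  obtain ⟨u₁, u₂, rfl, rfl, rfl⟩ := hphi
  obtain ⟨p, hp, hphip⟩ := exists_dyck_phi_eq_pair c
  refine ⟨u₁ ++ p ++ u₂, hu.insert hp, ?_⟩
  rw [phi_eq_map] at hphip
  simp [phi_eq_map, hphip]
termination_by w.length
decreasing_by subst_vars; simp

/-- The image `φ(D₂)` of the Dyck language `D₂` is exactly the language of all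
words over `{A, B}` with the same number of `A`'s and `B`'s. -/
theorem stmt_11 :
    ∀ w : List Bool,
      (∃ u, Dyck 2 u ∧ w = phi u) ↔ w.count true = w.count false := by
  refine fun w => ⟨?_, fun hw => ?_⟩
  · rintro ⟨u, hu, rfl⟩
    exact count_phi_eq_of_dyck hu
  · obtain ⟨u, hu, rfl⟩ := exists_dyck_phi_eq_of_count_eq w hw
    exact ⟨u, hu, rfl⟩
end
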